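/- The number of maximal H-parking functions of the complete hypergraph K_{n+1}^d equals n!/(d−1)!. -/

import Mathlib

open scoped Classical

def degT {V : Type*} [DecidableEq V] (E : Finset (Finset V)) (T : Finset V) (i : V) : ℕ :=
  (E.filter fun e => i ∈ e ∧ ¬ e ⊆ T).card

def IsHParking {V : Type*} [Fintype V] [DecidableEq V] (E : Finset (Finset V)) (q : V)
    (c : V → ℕ) : Prop :=
  ∀ T : Finset V, T.Nonempty → (∀ i ∈ T, i ≠ q) → ∃ i ∈ T, c i < degT E T i

def completeEdges (V : Type*) [Fintype V] [DecidableEq V] (d : ℕ) : Finset (Finset V) :=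
  Finset.univ.powersetCard d

def IsMaximalHParking {V : Type*} [Fintype V] [DecidableEq V] (E : Finset (Finset V)) (q : V)
    (c : V → ℕ) : Prop :=
  c q = 0 ∧ IsHParking E q c ∧
    ∀ c' : V → ℕ, c' q = 0 → IsHParking E q c' → c ≤ c' → c' = c

/-!
Write `u_k = C(n, d-1) - C(n-k, d-1)`. Relative to the last `m` vertices of an enumeration of the
nonsink vertices, each of them has degree `C(n, d-1) - C(m-1, d-1)`. Enumerating the nonsink
vertices so that an `H`-parking function `c` is nondecreasing therefore bounds `c` at the `k`-th
vertex by `u_k - 1`, and the function taking exactly these values along an enumeration is itself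
`H`-parking. All such functions have the same sum, so they are precisely the maximal ones, i.e.
the rearrangements of `(u_k - 1)_k`. Since `u` is injective except on the `d - 1` indices where
it equals `C(n, d-1)`, the stabiliser of this vector has order `(d-1)!`, so its orbit has
`n!/(d-1)!` points.
-/

open Finset
open scoped Nat

lemma Nat.choose_lt_choose_of_lt {a b r : ℕ} (hab : a < b) (hr : 0 < r) (hrb : r ≤ b) :
    a.choose r < b.choose r := by
  obtain ⟨b, rfl⟩ : ∃ b', b = b' + 1 := ⟨b - 1, by omega⟩
  obtain ⟨r, rfl⟩ : ∃ r', r = r' + 1 := ⟨r - 1, by omega⟩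
  rw [Nat.choose_succ_succ']
  have := Nat.choose_le_choose (r + 1) (Nat.le_of_lt_succ hab)
  have := Nat.choose_pos (Nat.le_of_succ_le_succ hrb)
  omega

lemma Nat.choose_eq_zero_of_choose_eq {a b r : ℕ} (h : a.choose r = b.choose r) (hab : a ≠ b)
    (hr : 0 < r) : a.choose r = 0 := by
  refine Nat.choose_eq_zero_of_lt (not_le.1 fun hra => ?_)
  rcases hab.lt_or_gt with hab | hab
  · exact (Nat.choose_lt_choose_of_lt hab hr (hra.trans hab.le)).ne h
  · exact (Nat.choose_lt_choose_of_lt hab hr hra).ne' h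

lemma Fintype.exists_equiv_fin_monotone_comp {α β : Type*} [Fintype α] [LinearOrder β]
    (f : α → β) {n : ℕ} (hα : Fintype.card α = n) : ∃ e : Fin n ≃ α, Monotone (f ∘ e) := by
  let e₀ : Fin n ≃ α := (Fintype.equivFinOfCardEq hα).symm
  exact ⟨(Tuple.sort (f ∘ e₀)).trans e₀, Tuple.monotone_sort (f ∘ e₀)⟩

open Equiv MulAction in
lemma ncard_range_comp_equiv_mul_prod_factorial {α β ι : Type*} [Fintype α] [Fintype β]
    [DecidableEq β] [DecidableEq ι] (f : β → ι) (h : Fintype.card α = Fintype.card β) :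
    (Set.range fun e : α ≃ β => f ∘ e).ncard *
      ∏ i ∈ univ.image f, (Fintype.card {b // f b = i})! = (Fintype.card β)! := by
  let e₀ := Fintype.equivOfCardEq h
  have hrange : (Set.range fun e : α ≃ β => f ∘ e) = (· ∘ e₀) '' orbit (Perm β)ᵈᵐᵃ f := by
    ext g
    constructor
    · rintro ⟨e, rfl⟩
      exact ⟨_, ⟨DomMulAct.mk (e₀.symm.trans e), rfl⟩, by ext; simp [DomMulAct.smul_apply]⟩
    · rintro ⟨_, ⟨c, rfl⟩, rfl⟩
      exact ⟨e₀.trans (DomMulAct.mk.symm c), rfl⟩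
  have hstab : Nat.card (stabilizer (Perm β)ᵈᵐᵃ f) = Fintype.card {σ : Perm β // f ∘ σ = f} := by
    rw [← Nat.card_eq_fintype_card]
    exact Nat.card_congr
      (subtypeEquiv DomMulAct.mk fun _ => DomMulAct.mem_stabilizer_iff.symm).symm
  rw [hrange, Set.ncard_image_of_injective _ e₀.surjective.injective_comp_right,
    ← index_stabilizer, ← DomMulAct.stabilizer_card', ← hstab, Subgroup.index_mul_card,
    ← Fintype.card_perm, ← Nat.card_eq_fintype_card]
  exact Nat.card_congr DomMulAct.mk.symm

lemma degT_completeEdges {V : Type*} [Fintype V] [DecidableEq V] {d : ℕ} (hd : 1 ≤ d)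
    {T : Finset V} {i : V} (hi : i ∈ T) :
    degT (completeEdges V d) T i =
      (Fintype.card V - 1).choose (d - 1) - (#T - 1).choose (d - 1) := by
  have hsplit : (completeEdges V d).filter (fun e => i ∈ e ∧ ¬ e ⊆ T) =
      (univ.powersetCard d).filter ({i} ⊆ ·) \ (T.powersetCard d).filter ({i} ⊆ ·) := by
    ext e
    simp only [completeEdges, mem_filter, mem_powersetCard, mem_sdiff, singleton_subset_iff,
      subset_univ, true_and]
    tauto
  have hsub : (T.powersetCard d).filter ({i} ⊆ ·) ⊆ (univ.powersetCard d).filter ({i} ⊆ ·) :=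
    filter_subset_filter _ (powersetCard_mono (subset_univ T))
  rw [degT, hsplit, card_sdiff_of_subset hsub,
    card_filter_powersetCard_subset _ _ _ (subset_univ _) (by simpa using hd),
    card_filter_powersetCard_subset _ _ _ (singleton_subset_iff.2 hi) (by simpa using hd),
    card_univ, card_singleton]

/-- `u_{k+1}` in the notation of the header. -/
def parkingBound (n d k : ℕ) : ℕ := n.choose (d - 1) - (n - 1 - k).choose (d - 1)

lemma parkingBound_pos {n d k : ℕ} (hd : 2 ≤ d) (hdn : d ≤ n + 1) (hk : k < n) :
    0 < parkingBound n d k :=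
  Nat.sub_pos_of_lt (Nat.choose_lt_choose_of_lt (by omega) (by omega) (by omega))

def maxParkingVector (n d : ℕ) (k : Fin n) : ℕ := parkingBound n d k - 1

section

variable {n d : ℕ}

lemma maxParkingVector_eq_top_iff (hd : 2 ≤ d) (hdn : d ≤ n + 1) (k : Fin n) :
    maxParkingVector n d k = n.choose (d - 1) - 1 ↔ n + 1 - d ≤ k := by
  have hpos := parkingBound_pos hd hdn k.2
  unfold maxParkingVector parkingBound at *
  constructor
  · intro h
    have hC : (n - 1 - k).choose (d - 1) = 0 := by omega
    rw [Nat.choose_eq_zero_iff] at hC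
    have := k.isLt
    omega
  · intro h
    rw [Nat.choose_eq_zero_of_lt (show n - 1 - k < d - 1 by omega)]
    omega

lemma maxParkingVector_eq_top_of_eq (hd : 2 ≤ d) (hdn : d ≤ n + 1) {j k : Fin n}
    (h : maxParkingVector n d j = maxParkingVector n d k) (hjk : j ≠ k) :
    maxParkingVector n d k = n.choose (d - 1) - 1 := by
  have hposj := parkingBound_pos hd hdn j.2
  have hposk := parkingBound_pos hd hdn k.2
  unfold maxParkingVector parkingBound at *
  have hC : (n - 1 - k).choose (d - 1) = (n - 1 - j).choose (d - 1) := by omega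
  have := Nat.choose_eq_zero_of_choose_eq hC (by have := Fin.val_injective.ne hjk; omega)
    (by omega)
  omega

lemma prod_factorial_card_fiber_maxParkingVector (hd : 2 ≤ d) (hdn : d ≤ n + 1) :
    ∏ i ∈ univ.image (maxParkingVector n d),
      (Fintype.card {k // maxParkingVector n d k = i})! = (d - 1)! := by
  let top : Fin n := ⟨n + 1 - d, by omega⟩
  have htop : Fintype.card {k // maxParkingVector n d k = n.choose (d - 1) - 1} = d - 1 := by
    rw [Fintype.card_congr (Equiv.subtypeEquivRight fun k =>
        (maxParkingVector_eq_top_iff hd hdn k).trans (Fin.le_def (a := top)).symm),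
      Fintype.card_subtype, filter_le_eq_Ici, Fin.card_Ici]
    simp only [top]
    omega
  rw [prod_eq_single_of_mem _ (mem_image.2 ⟨_, mem_univ _, (maxParkingVector_eq_top_iff hd hdn
    ⟨n - 1, by omega⟩).2 (by simp; omega)⟩), htop]
  intro i _ hi
  refine Nat.factorial_eq_one.2 (Fintype.card_le_one_iff.2 fun a b => ?_)
  by_contra hab
  exact hi (b.2.symm.trans (maxParkingVector_eq_top_of_eq hd hdn (a.2.trans b.2.symm)
    (fun h => hab (Subtype.ext h))))

end

section

variable {V : Type*} {q : V} {n d : ℕ}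

noncomputable def maxParkingOf (d : ℕ) (e : Fin n ≃ {v : V // v ≠ q}) : V → ℕ :=
  Function.extend Subtype.val (maxParkingVector n d ∘ e.symm) 0

@[simp] lemma maxParkingOf_sink (e : Fin n ≃ {v : V // v ≠ q}) : maxParkingOf d e q = 0 :=
  Function.extend_apply' _ _ _ fun ⟨v, hv⟩ => v.2 hv

@[simp] lemma maxParkingOf_apply (e : Fin n ≃ {v : V // v ≠ q}) (k : Fin n) :
    maxParkingOf d e (e k) = maxParkingVector n d k := by
  simp [maxParkingOf]

lemma ncard_range_maxParkingOf :
    (Set.range (maxParkingOf d : (Fin n ≃ {v : V // v ≠ q}) → V → ℕ)).ncard =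
      (Set.range fun e : {v : V // v ≠ q} ≃ Fin n => maxParkingVector n d ∘ e).ncard := by
  rw [← Set.ncard_image_of_injective _
    (Function.extend_injective Subtype.val_injective (0 : V → ℕ))]
  congr 1
  ext c
  constructor
  · rintro ⟨e, rfl⟩
    exact ⟨_, ⟨e.symm, rfl⟩, rfl⟩
  · rintro ⟨_, ⟨e, rfl⟩, rfl⟩
    exact ⟨e.symm, rfl⟩

lemma sum_maxParkingOf [Fintype V] [DecidableEq V] (e : Fin n ≃ {v : V // v ≠ q}) :
    ∑ v, maxParkingOf d e v = ∑ k, maxParkingVector n d k := by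
  rw [Fintype.sum_eq_add_sum_subtype_ne _ q, maxParkingOf_sink, zero_add, ← e.sum_comp]
  simp

variable [Fintype V] [DecidableEq V]

lemma IsHParking.exists_le_maxParkingOf (hV : Fintype.card V = n + 1) (hd : 1 ≤ d) {c : V → ℕ}
    (hc : IsHParking (completeEdges V d) q c) (hq : c q = 0) :
    ∃ e : Fin n ≃ {v : V // v ≠ q}, c ≤ maxParkingOf d e := by
  obtain ⟨e, he⟩ := Fintype.exists_equiv_fin_monotone_comp (fun v : {v : V // v ≠ q} => c v)
    (show Fintype.card {v : V // v ≠ q} = n by simp [hV])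
  refine ⟨e, fun v => ?_⟩
  by_cases hvq : v = q
  · simp [hvq, hq]
  obtain ⟨k, rfl⟩ : ∃ k, (e k : V) = v := ⟨e.symm ⟨v, hvq⟩, by simp⟩
  let T : Finset V := (Ici k).map (e.toEmbedding.trans (Function.Embedding.subtype _))
  obtain ⟨_, hiT, hi⟩ := hc T (by simp [T]) (by simpa [T] using fun j _ => (e j).2)
  obtain ⟨j, hkj, rfl⟩ : ∃ j, k ≤ j ∧ (e j : V) = _ := by simpa [T] using hiT
  have hT : #T = n - k := by simp [T]
  rw [degT_completeEdges hd hiT, hT, hV, Nat.add_sub_cancel, Nat.sub_right_comm] at hi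
  have hmono : c (e k) ≤ c (e j) := he hkj
  rw [maxParkingOf_apply]
  exact Nat.le_sub_one_of_lt (hmono.trans_lt hi)

lemma isHParking_maxParkingOf (hV : Fintype.card V = n + 1) (hd : 2 ≤ d) (hdn : d ≤ n + 1)
    (e : Fin n ≃ {v : V // v ≠ q}) : IsHParking (completeEdges V d) q (maxParkingOf d e) := by
  intro T hT hTq
  let R : Finset (Fin n) := univ.filter fun k => (e k : V) ∈ T
  have hR : R.Nonempty := by
    obtain ⟨v, hv⟩ := hT
    exact ⟨e.symm ⟨v, hTq v hv⟩, by simpa [R] using hv⟩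
  let k := R.min' hR
  have hkT : (e k : V) ∈ T := (mem_filter.1 (R.min'_mem hR)).2
  have hTk : T ⊆ (Ici k).map (e.toEmbedding.trans (Function.Embedding.subtype _)) := by
    intro v hv
    obtain ⟨j, rfl⟩ : ∃ j, (e j : V) = v := ⟨e.symm ⟨v, hTq v hv⟩, by simp⟩
    exact mem_map.2 ⟨j, mem_Ici.2 (R.min'_le j (by simpa [R] using hv)), rfl⟩
  have hcard : #T ≤ n - k := by simpa using card_le_card hTk
  refine ⟨e k, hkT, ?_⟩
  rw [maxParkingOf_apply, degT_completeEdges (by omega) hkT, hV, Nat.add_sub_cancel]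
  have := parkingBound_pos hd hdn k.2
  have := Nat.choose_le_choose (d - 1) (show #T - 1 ≤ n - 1 - k by omega)
  unfold maxParkingVector parkingBound at *
  omega

lemma isMaximalHParking_maxParkingOf (hV : Fintype.card V = n + 1) (hd : 2 ≤ d)
    (hdn : d ≤ n + 1) (e : Fin n ≃ {v : V // v ≠ q}) :
    IsMaximalHParking (completeEdges V d) q (maxParkingOf d e) := by
  refine ⟨maxParkingOf_sink e, isHParking_maxParkingOf hV hd hdn e, fun c hq hc hle => ?_⟩
  obtain ⟨e', hle'⟩ := hc.exists_le_maxParkingOf hV (by omega) hq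
  have hsum : ∑ v, c v ≤ ∑ v, maxParkingOf d e v :=
    calc ∑ v, c v ≤ ∑ v, maxParkingOf d e' v := sum_le_sum fun v _ => hle' v
      _ = ∑ v, maxParkingOf d e v := by rw [sum_maxParkingOf, sum_maxParkingOf]
  have heq := (sum_eq_sum_iff_of_le fun v _ => hle v).1
    (le_antisymm (sum_le_sum fun v _ => hle v) hsum)
  exact funext fun v => (heq v (mem_univ v)).symm

lemma isMaximalHParking_iff (hV : Fintype.card V = n + 1) (hd : 2 ≤ d) (hdn : d ≤ n + 1)
    {c : V → ℕ} :
    IsMaximalHParking (completeEdges V d) q c ↔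
      ∃ e : Fin n ≃ {v : V // v ≠ q}, maxParkingOf d e = c := by
  constructor
  · rintro ⟨hq, hc, hmax⟩
    obtain ⟨e, hle⟩ := hc.exists_le_maxParkingOf hV (by omega) hq
    exact ⟨e, hmax _ (maxParkingOf_sink e) (isHParking_maxParkingOf hV hd hdn e) hle⟩
  · rintro ⟨e, rfl⟩
    exact isMaximalHParking_maxParkingOf hV hd hdn e

end

/-- The number of maximal `H`-parking functions of the complete hypergraph `K_{n+1}^d`
equals `n!/(d−1)!`. -/
theorem card_maximalHParking_complete {V : Type*} [Fintype V] [DecidableEq V]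
    {n d : ℕ} (hV : Fintype.card V = n + 1) (hd : 2 ≤ d) (hdn : d ≤ n + 1) (q : V) :
    Nat.card {c : V → ℕ // IsMaximalHParking (completeEdges V d) q c} =
      Nat.factorial n / Nat.factorial (d - 1) := by
  have hmax : {c | IsMaximalHParking (completeEdges V d) q c} = Set.range (maxParkingOf d) :=
    Set.ext fun _ => isMaximalHParking_iff hV hd hdn
  have hcount := ncard_range_comp_equiv_mul_prod_factorial (maxParkingVector n d)
    (α := {v : V // v ≠ q}) (by simp [hV])
  rw [prod_factorial_card_fiber_maxParkingVector hd hdn, Fintype.card_fin,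
    ← ncard_range_maxParkingOf, ← hmax, ← Nat.card_coe_set_eq] at hcount
  exact (Nat.div_eq_of_eq_mul_left (Nat.factorial_pos _) hcount.symm).symm
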